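/- arXiv:cs/0611146 — 5 statements merged into one kernel-verified Lean document; each statement's English description precedes it below -/
import Mathlib

section
/- For the random binning function F from X^n to Y^m, where each x ∈ X^n is independently and uniformly assigned a value in Y^m, the expected joint spectrum of the relation {(x, F(x)) : x ∈ X^n} equals the joint spectrum of the full product set X^n × Y^m: E[S_{XY}(F)(P,Q)] = S_X(X^n)(P) · S_Y(Y^m)(Q) for all types P, Q. -/
open Finset Filter

open scoped Classical

noncomputable def empDist {X : Type*} [Fintype X] {n : ℕ} (x : Fin n → X) : X → ℝ :=
  fun a => ((univ.filter fun i => x i = a).card : ℝ) / n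

noncomputable def specS {X : Type*} [Fintype X] {n : ℕ}
    (A : Finset (Fin n → X)) (P : X → ℝ) : ℝ :=
  ((A.filter fun x => empDist x = P).card : ℝ) / (A.card : ℝ)

noncomputable def jointSpec {X Y : Type*} [Fintype X] [Fintype Y] {n m : ℕ}
    (f : (Fin n → X) → (Fin m → Y)) (P : X → ℝ) (Q : Y → ℝ) : ℝ :=
  ((univ.filter fun x : Fin n → X => empDist x = P ∧ empDist (f x) = Q).card : ℝ) /
    ((Fintype.card X : ℝ) ^ n)

noncomputable def fullJointSpec (X Y : Type*) [Fintype X] [Fintype Y] (n m : ℕ)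
    (P : X → ℝ) (Q : Y → ℝ) : ℝ :=
  specS (univ : Finset (Fin n → X)) P * specS (univ : Finset (Fin m → Y)) Q

noncomputable def alphaE {X Y : Type*} [Fintype X] [Fintype Y] {n m : ℕ} {Ω : Type*}
    [Fintype Ω] (μ : Ω → ℝ) (F : Ω → (Fin n → X) → (Fin m → Y))
    (P : X → ℝ) (Q : Y → ℝ) : ℝ :=
  (∑ ω, μ ω * jointSpec (F ω) P Q) / fullJointSpec X Y n m P Q

def permAct {X : Type*} {n : ℕ} (σ : Equiv.Perm (Fin n)) (x : Fin n → X) : Fin n → X :=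
  fun i => x (σ.symm i)

noncomputable def entH {X : Type*} [Fintype X] (P : X → ℝ) : ℝ :=
  ∑ a, -(P a * Real.log (P a))

noncomputable def binEnt (x : ℝ) : ℝ := -(x * Real.log x) - (1 - x) * Real.log (1 - x)

theorem stmt2 {X Y : Type*} [Fintype X] [Fintype Y] {n m : ℕ}
    (P : X → ℝ) (Q : Y → ℝ) :
    (∑ g : (Fin n → X) → (Fin m → Y), jointSpec g P Q) /
        (Fintype.card ((Fin n → X) → (Fin m → Y)) : ℝ)
      = specS (univ : Finset (Fin n → X)) P * specS (univ : Finset (Fin m → Y)) Q := by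
  classical
  set p : (Fin n → X) → Prop := fun x => empDist x = P with hp
  set q : (Fin m → Y) → Prop := fun y => empDist y = Q with hq
  set N := Fintype.card (Fin n → X) with hN
  set K := Fintype.card (Fin m → Y) with hK
  have key : ∀ x : Fin n → X,
      (∑ g : (Fin n → X) → (Fin m → Y), (if q (g x) then (1:ℝ) else 0))
        = ((univ.filter q).card : ℝ) * (K : ℝ) ^ (N - 1) := by
    intro x
    rw [← Equiv.sum_comp (Equiv.funSplitAt x (Fin m → Y)).symm
        (fun g => if q (g x) then (1:ℝ) else 0)]
    have h1 : ∀ pr : (Fin m → Y) × ({ j // j ≠ x } → Fin m → Y),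
        ((Equiv.funSplitAt x (Fin m → Y)).symm pr) x = pr.1 := by
      intro pr; simp [Equiv.funSplitAt, Equiv.piSplitAt]
    simp only [h1]
    rw [Fintype.sum_prod_type]
    have hc : Fintype.card ({ j // j ≠ x } → Fin m → Y) = K ^ (N - 1) := by
      rw [Fintype.card_fun]
      congr 1
      have h2 : Fintype.card { j // j ≠ x } =
          Fintype.card (Fin n → X) - Fintype.card { j // j = x } :=
        Fintype.card_subtype_compl _
      rw [h2, Fintype.card_subtype_eq]
    have h3 : ∀ y : Fin m → Y,
        (∑ _x2 : { j // j ≠ x } → Fin m → Y, (if q y then (1:ℝ) else 0))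
          = (K:ℝ)^(N-1) * (if q y then 1 else 0) := by
      intro y
      rw [Finset.sum_const, Finset.card_univ, hc, nsmul_eq_mul]
      push_cast
      ring
    simp only [h3]
    rw [← Finset.mul_sum, Finset.sum_boole]
    ring
  have total : (∑ g : (Fin n → X) → (Fin m → Y),
      ((univ.filter fun x => p x ∧ q (g x)).card : ℝ))
      = ((univ.filter p).card : ℝ) * ((univ.filter q).card : ℝ) * (K:ℝ)^(N-1) := by
    have hsplit : ∀ g : (Fin n → X) → (Fin m → Y),
        ((univ.filter fun x => p x ∧ q (g x)).card : ℝ)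
        = ∑ x, (if p x then (1:ℝ) else 0) * (if q (g x) then 1 else 0) := by
      intro g
      rw [Finset.card_filter]
      push_cast
      apply Finset.sum_congr rfl
      intro x _
      have hmul : ∀ (a b : Prop) (_ : Decidable a) (_ : Decidable b),
          (if a ∧ b then (1:ℝ) else 0) = (if a then 1 else 0) * (if b then 1 else 0) := by
        intro a b _ _
        by_cases ha : a <;> by_cases hb : b <;> simp [ha, hb]
      exact hmul (p x) (q (g x)) _ _
    simp only [hsplit]
    rw [Finset.sum_comm]
    have h4 : ∀ x : Fin n → X,
        (∑ g : (Fin n → X) → (Fin m → Y),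
          (if p x then (1:ℝ) else 0) * (if q (g x) then 1 else 0))
        = (if p x then (1:ℝ) else 0) * (((univ.filter q).card : ℝ) * (K:ℝ)^(N-1)) := by
      intro x
      rw [← Finset.mul_sum, key x]
    simp only [h4]
    rw [← Finset.sum_mul, Finset.sum_boole]
    ring
  have hXn : ((Fintype.card X : ℝ)) ^ n = (N : ℝ) := by
    rw [hN, Fintype.card_fun, Fintype.card_fin]
    push_cast
    ring
  have hG : (Fintype.card ((Fin n → X) → Fin m → Y) : ℝ) = (K:ℝ)^N := by
    rw [Fintype.card_fun]
    push_cast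
    ring
  simp only [jointSpec, specS, hG, hXn, Finset.card_univ, ← hN, ← hK, ← hp, ← hq]
  rw [← Finset.sum_div, total]
  by_cases hN0 : N = 0
  · have hA : (univ.filter p).card = 0 := by
      rw [Finset.card_eq_zero]
      apply Finset.eq_empty_of_forall_notMem
      intro x hx
      have : (univ : Finset (Fin n → X)).card = 0 := by simp [Finset.card_univ, ← hN, hN0]
      have := Finset.card_pos.mpr ⟨x, Finset.mem_univ x⟩
      omega
    simp [hA, hN0]
  by_cases hK0 : K = 0
  · have hGA : (K:ℝ)^N = 0 := by
      rw [hK0]; push_cast; exact zero_pow hN0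
    rw [hGA, div_zero]
    have hz : ((univ.filter q).card : ℝ) / (K:ℝ) = 0 := by rw [hK0]; simp
    rw [hz, mul_zero]
  have hKpow : (K:ℝ)^N = (K:ℝ)^(N-1) * K := by
    rw [← pow_succ]
    congr 1
    omega
  rw [hKpow]
  have hNne : (N:ℝ) ≠ 0 := Nat.cast_ne_zero.mpr hN0
  have hKne : (K:ℝ) ≠ 0 := Nat.cast_ne_zero.mpr hK0
  have hKpne : (K:ℝ)^(N-1) ≠ 0 := pow_ne_zero _ hKne
  field_simp
end

section
/- For any random function F: X^n → Y^m, define F̃ = Σ_m ∘ F ∘ Σ_n where Σ_n, Σ_m are independent uniformly random permutations on n and m letters respectively (independent of F). Then for any x ∈ X^n and y ∈ Y^m, Pr{F̃(x) = y} = |Y|^{-m} · α(F)(P_x, P_y), where α(F)(P,Q) = E[S_{XY}(F)(P,Q)] / S_{XY}(X^n × Y^m)(P,Q). -/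
open Finset Filter

open scoped Classical

/-!
The permutations act on `X^n` and `Y^m` with the type classes as orbits. For a finite group
acting on a finite set, `g • b` is uniformly distributed on the orbit of `b` when `g` is uniform,
since by orbit–stabilizer every point of the orbit is hit by exactly `|Stab b|` group elements.
Hence `Σ_n x` is uniform on `T_{P_x}`, the event `Σ_m z = y` has probability
`[z ∈ T_{P_y}] / |T_{P_y}|`, and `Pr{F̃ x = y} = #{x' ∈ T_{P_x} | F x' ∈ T_{P_y}} / (|T_{P_x}| |T_{P_y}|)`,
which is `|Y|^{-m} α(F)(P_x, P_y)` after unfolding the spectra.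
-/

open MulAction

section OrbitCounting

variable {G H α β : Type*} [Group G] [Fintype G] [MulAction G α] [Fintype α]
  [Group H] [Fintype H] [MulAction H β] [Fintype β]

theorem sum_comp_smul_eq_card_stabilizer_nsmul {M : Type*} [AddCommMonoid M] (b : α)
    (f : α → M) :
    ∑ g : G, f (g • b) = Nat.card (stabilizer G b) • ∑ a ∈ univ.filter (· ∈ orbit G b), f a := by
  calc ∑ g : G, f (g • b)
      = ∑ p : orbit G b × stabilizer G b, f p.1 :=
        Fintype.sum_equiv (orbitProdStabilizerEquivGroup G b).symm _ _ fun _ => rfl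
    _ = Nat.card (stabilizer G b) • ∑ a : orbit G b, f a := by
        simp only [Fintype.sum_prod_type, sum_const, card_univ, ← smul_sum,
          Nat.card_eq_fintype_card]
    _ = _ := by rw [Finset.sum_subtype (p := (· ∈ orbit G b)) _ (fun a => by simp) f]

theorem card_filter_orbit_mul_card_stabilizer (a : α) :
    #(univ.filter (· ∈ orbit G a)) * Nat.card (stabilizer G a) = Fintype.card G := by
  have h := sum_comp_smul_eq_card_stabilizer_nsmul (G := G) a fun _ => 1
  simp only [sum_const, smul_eq_mul, mul_one, card_univ] at h
  rw [h, mul_comm]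

-- `[DecidableEq β]` instead of classical decidability, so that the filter below matches the one
-- elaborated for a concrete `β` such as `Fin m → Y`.
theorem card_filter_smul_comp_smul_eq [DecidableEq β] (f : α → β) (a : α) (b : β) :
    #(univ.filter fun p : G × H => p.2 • f (p.1 • a) = b)
      = Nat.card (stabilizer G a) * Nat.card (stabilizer H b)
          * #(univ.filter fun a' => a' ∈ orbit G a ∧ f a' ∈ orbit H b) := by
  have hH : ∀ z : β, #(univ.filter fun h : H => h • z = b)
      = Nat.card (stabilizer H b) * if z ∈ orbit H b then 1 else 0 := by
    intro z
    calc #(univ.filter fun h : H => h • z = b)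
        = ∑ h : H, if h⁻¹ • b = z then 1 else 0 := by
          simp_rw [card_filter, inv_smul_eq_iff, eq_comm]
      _ = ∑ h : H, if h • b = z then 1 else 0 :=
          Fintype.sum_equiv (Equiv.inv H) _ _ fun _ => rfl
      _ = _ := by
          rw [sum_comp_smul_eq_card_stabilizer_nsmul b fun b' => if b' = z then 1 else 0,
            sum_ite_eq', smul_eq_mul]
          simp
  calc #(univ.filter fun p : G × H => p.2 • f (p.1 • a) = b)
      = ∑ g : G, #(univ.filter fun h : H => h • f (g • a) = b) := by
        rw [← univ_product_univ, card_filter, sum_product]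
        simp_rw [card_filter]
    _ = ∑ g : G, Nat.card (stabilizer H b) * if f (g • a) ∈ orbit H b then 1 else 0 := by
        simp_rw [hH]
    _ = _ := by
        rw [← mul_sum, sum_comp_smul_eq_card_stabilizer_nsmul a
          fun a' => if f a' ∈ orbit H b then 1 else 0, ← sum_filter, card_eq_sum_ones,
          filter_filter, smul_eq_mul]
        ring

theorem card_filter_smul_comp_smul_div_card [DecidableEq β] (f : α → β) (a : α) (b : β) :
    (#(univ.filter fun p : G × H => p.2 • f (p.1 • a) = b) : ℝ)
        / (Fintype.card G * Fintype.card H)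
      = #(univ.filter fun a' => a' ∈ orbit G a ∧ f a' ∈ orbit H b)
        / (#(univ.filter (· ∈ orbit G a)) * #(univ.filter (· ∈ orbit H b))) := by
  rw [card_filter_smul_comp_smul_eq, ← card_filter_orbit_mul_card_stabilizer a,
    ← card_filter_orbit_mul_card_stabilizer b]
  have hGa : (Nat.card (stabilizer G a) : ℝ) ≠ 0 := Nat.cast_ne_zero.mpr Nat.card_pos.ne'
  have hHb : (Nat.card (stabilizer H b) : ℝ) ≠ 0 := Nat.cast_ne_zero.mpr Nat.card_pos.ne'
  push_cast
  field_simp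

end OrbitCounting

section TypeClasses

variable {X : Type*} {n : ℕ}

attribute [local instance] arrowAction

theorem smul_eq_permAct (σ : Equiv.Perm (Fin n)) (x : Fin n → X) : σ • x = permAct σ x := rfl

variable [Fintype X]

theorem empDist_permAct (σ : Equiv.Perm (Fin n)) (x : Fin n → X) :
    empDist (permAct σ x) = empDist x := by
  funext a
  unfold empDist permAct
  congr 2
  exact card_bij' (fun i _ => σ.symm i) (fun i _ => σ i) (by simp) (by simp) (by simp) (by simp)

theorem card_filter_eq_of_empDist_eq {x x' : Fin n → X} (h : empDist x = empDist x') (a : X) :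
    #(univ.filter fun i => x i = a) = #(univ.filter fun i => x' i = a) := by
  rcases n.eq_zero_or_pos with rfl | hn
  · simp
  · have ha := congrFun h a
    unfold empDist at ha
    rwa [div_left_inj' (by positivity), Nat.cast_inj] at ha

theorem exists_permAct_eq_of_empDist_eq {x x' : Fin n → X} (h : empDist x = empDist x') :
    ∃ σ : Equiv.Perm (Fin n), permAct σ x = x' := by
  -- match the positions carrying each letter `a`; there are equally many in `x` and in `x'`
  let e : Fin n ≃ Fin n := Equiv.ofFiberEquiv (f := x') (g := x) fun a =>
    Fintype.equivOfCardEq <| by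
      rw [Fintype.card_subtype, Fintype.card_subtype, card_filter_eq_of_empDist_eq h]
  exact ⟨e.symm, funext fun i => Equiv.ofFiberEquiv_map _ i⟩

theorem mem_orbit_iff_empDist_eq (x x' : Fin n → X) :
    x' ∈ orbit (Equiv.Perm (Fin n)) x ↔ empDist x' = empDist x := by
  constructor
  · rintro ⟨σ, rfl⟩
    exact empDist_permAct σ x
  · exact fun h => exists_permAct_eq_of_empDist_eq h.symm

theorem card_filter_permAct_comp_permAct_div_card {Y : Type*} [Fintype Y] {m : ℕ}
    (f : (Fin n → X) → (Fin m → Y)) (x : Fin n → X) (y : Fin m → Y) :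
    (#(univ.filter fun p : Equiv.Perm (Fin n) × Equiv.Perm (Fin m) =>
        permAct p.2 (f (permAct p.1 x)) = y) : ℝ)
        / (Fintype.card (Equiv.Perm (Fin n)) * Fintype.card (Equiv.Perm (Fin m)))
      = #(univ.filter fun x' => empDist x' = empDist x ∧ empDist (f x') = empDist y)
        / (#(univ.filter fun x' : Fin n → X => empDist x' = empDist x)
          * #(univ.filter fun y' : Fin m → Y => empDist y' = empDist y)) := by
  have h := card_filter_smul_comp_smul_div_card (G := Equiv.Perm (Fin n))
    (H := Equiv.Perm (Fin m)) f x y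
  simp only [mem_orbit_iff_empDist_eq, smul_eq_permAct] at h
  exact h

end TypeClasses

theorem card_pow_ne_zero_of_tuple {X : Type*} [Fintype X] {n : ℕ} (x : Fin n → X) :
    (Fintype.card X : ℝ) ^ n ≠ 0 := by
  have h : 0 < Fintype.card (Fin n → X) := Fintype.card_pos_iff.mpr ⟨x⟩
  rw [Fintype.card_fun, Fintype.card_fin] at h
  exact_mod_cast h.ne'

theorem inv_card_pow_mul_alphaE {X Y : Type*} [Fintype X] [Fintype Y] {n m : ℕ}
    {Ω : Type*} [Fintype Ω] (μ : Ω → ℝ) (F : Ω → (Fin n → X) → (Fin m → Y))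
    (x : Fin n → X) (y : Fin m → Y) :
    ((Fintype.card Y : ℝ) ^ m)⁻¹ * alphaE μ F (empDist x) (empDist y)
      = (∑ ω, μ ω * #(univ.filter fun x' => empDist x' = empDist x ∧ empDist (F ω x') = empDist y))
        / (#(univ.filter fun x' : Fin n → X => empDist x' = empDist x)
          * #(univ.filter fun y' : Fin m → Y => empDist y' = empDist y)) := by
  have hX := card_pow_ne_zero_of_tuple x
  have hY := card_pow_ne_zero_of_tuple y
  unfold alphaE fullJointSpec specS jointSpec
  simp only [card_univ, Fintype.card_fun, Fintype.card_fin, Nat.cast_pow, ← sum_div, mul_div_assoc']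
  field_simp

theorem stmt4_general {X Y : Type*} [Fintype X] [Fintype Y] {n m : ℕ}
    {Ω : Type*} [Fintype Ω] (μ : Ω → ℝ)
    (F : Ω → (Fin n → X) → (Fin m → Y)) (x : Fin n → X) (y : Fin m → Y) :
    (∑ ω, ∑ σ : Equiv.Perm (Fin n), ∑ τ : Equiv.Perm (Fin m),
        μ ω / ((Fintype.card (Equiv.Perm (Fin n)) : ℝ) * (Fintype.card (Equiv.Perm (Fin m)) : ℝ)) *
          (if permAct τ (F ω (permAct σ x)) = y then 1 else 0))
      = ((Fintype.card Y : ℝ) ^ m)⁻¹ * alphaE μ F (empDist x) (empDist y) := by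
  calc _ = ∑ ω, μ ω * ((#(univ.filter fun p : Equiv.Perm (Fin n) × Equiv.Perm (Fin m) =>
            permAct p.2 (F ω (permAct p.1 x)) = y) : ℝ)
            / (Fintype.card (Equiv.Perm (Fin n)) * Fintype.card (Equiv.Perm (Fin m)))) := by
        refine sum_congr rfl fun ω _ => ?_
        simp_rw [← mul_sum]
        rw [← sum_product', univ_product_univ, sum_boole]
        ring
    _ = _ := by
        simp_rw [card_filter_permAct_comp_permAct_div_card, inv_card_pow_mul_alphaE, sum_div,
          mul_div_assoc]

theorem stmt4 {X Y : Type*} [Fintype X] [Fintype Y] {n m : ℕ}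
    {Ω : Type*} [Fintype Ω] (μ : Ω → ℝ) (hμ0 : ∀ ω, 0 ≤ μ ω) (hμ1 : ∑ ω, μ ω = 1)
    (F : Ω → (Fin n → X) → (Fin m → Y)) (x : Fin n → X) (y : Fin m → Y) :
    (∑ ω, ∑ σ : Equiv.Perm (Fin n), ∑ τ : Equiv.Perm (Fin m),
        μ ω / ((Fintype.card (Equiv.Perm (Fin n)) : ℝ) * (Fintype.card (Equiv.Perm (Fin m)) : ℝ)) *
          (if permAct τ (F ω (permAct σ x)) = y then 1 else 0))
      = ((Fintype.card Y : ℝ) ^ m)⁻¹ * alphaE μ F (empDist x) (empDist y) :=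
  stmt4_general μ F x y
end

section
/- Under the setup of the previous statement, for any distinct v, v̂ ∈ V^n and any x, x̂ ∈ X^m, Pr{Φ(v̂) = x̂ | Φ(v) = x} = β(F_n,q_n)(v,v̂,x,x̂) · P_{X^m|V^n}(x̂|v̂), where P_{X^m|V^n}(x|v) = |q_n^{-1}(v,x)|/|U|^l and β(F_n,q_n)(v,v̂,x,x̂) = ∑_{u ∈ q_n^{-1}(v,x), û ∈ q_n^{-1}(v̂,x̂)} α(F_n)(P_{v̂−v}, P_{û−u}) / (|q_n^{-1}(v,x)| · |q_n^{-1}(v̂,x̂)|). -/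
open Finset Filter

open scoped Classical

noncomputable def prPhi {V U Xc : Type*} [Fintype V] [Fintype U] [Fintype Xc]
    [AddCommGroup V] [AddCommGroup U] {n l k : ℕ} {Ω : Type*} [Fintype Ω] (μ : Ω → ℝ)
    (F : Ω → ((Fin n → V) →+ (Fin l → U)))
    (q : (Fin n → V) → (Fin l → U) → (Fin k → Xc))
    (v : Fin n → V) (x : Fin k → Xc) : ℝ :=
  ∑ ω, ∑ σ : Equiv.Perm (Fin n), ∑ τ : Equiv.Perm (Fin l), ∑ b : Fin l → U,
    μ ω / ((Fintype.card (Equiv.Perm (Fin n)) : ℝ) * (Fintype.card (Equiv.Perm (Fin l)) : ℝ) *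
        (Fintype.card (Fin l → U) : ℝ)) *
      (if q v (permAct τ (F ω (permAct σ v)) + b) = x then 1 else 0)

noncomputable def prPhi2 {V U Xc : Type*} [Fintype V] [Fintype U] [Fintype Xc]
    [AddCommGroup V] [AddCommGroup U] {n l k : ℕ} {Ω : Type*} [Fintype Ω] (μ : Ω → ℝ)
    (F : Ω → ((Fin n → V) →+ (Fin l → U)))
    (q : (Fin n → V) → (Fin l → U) → (Fin k → Xc))
    (v v' : Fin n → V) (x x' : Fin k → Xc) : ℝ :=
  ∑ ω, ∑ σ : Equiv.Perm (Fin n), ∑ τ : Equiv.Perm (Fin l), ∑ b : Fin l → U,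
    μ ω / ((Fintype.card (Equiv.Perm (Fin n)) : ℝ) * (Fintype.card (Equiv.Perm (Fin l)) : ℝ) *
        (Fintype.card (Fin l → U) : ℝ)) *
      (if q v (permAct τ (F ω (permAct σ v)) + b) = x ∧
          q v' (permAct τ (F ω (permAct σ v')) + b) = x' then 1 else 0)

/-! Since `Φ(v) = q(v, c + b)` with a uniform dither `b`, `Pr{Φ(v) = x} = |q⁻¹(v,x)| / |U|^l`,
and by linearity of `F` the joint event `Φ(v) = x, Φ(v') = x'` splits over the pairs of preimages
`(u, u')` into `|U|^{-l} · Pr{τ F(σ (v' - v)) = u' - u}`. A uniformly random permutation sends a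
fixed sequence to a uniformly distributed sequence of the same type (every such sequence is hit by
exactly `stabCard` permutations), which turns this last probability into
`α(P_{v'-v}, P_{u'-u}) / |U|^l`. -/

open Equiv

section PermAct

variable {α : Type*} {m : ℕ}

lemma permAct_mul (a b : Perm (Fin m)) (x : Fin m → α) :
    permAct (a * b) x = permAct a (permAct b x) := rfl

lemma permAct_one (x : Fin m → α) : permAct (1 : Perm (Fin m)) x = x := rfl

lemma permAct_sub [AddGroup α] (σ : Perm (Fin m)) (x y : Fin m → α) :
    permAct σ (x - y) = permAct σ x - permAct σ y := rfl

lemma permAct_inv_eq_iff (a : Perm (Fin m)) (x y : Fin m → α) :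
    permAct a⁻¹ x = y ↔ x = permAct a y := by
  constructor
  · rintro rfl; rw [← permAct_mul, mul_inv_cancel, permAct_one]
  · rintro rfl; rw [← permAct_mul, inv_mul_cancel, permAct_one]

noncomputable def stabCard (d : Fin m → α) : ℕ :=
  #{σ : Perm (Fin m) | permAct σ d = d}

lemma stabCard_pos (d : Fin m → α) : 0 < stabCard d :=
  Finset.card_pos.2 ⟨1, by simp [permAct_one]⟩

variable [Fintype α]

lemma empDist_permAct_s12 (σ : Perm (Fin m)) (d : Fin m → α) :
    empDist (permAct σ d) = empDist d := by
  funext a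
  unfold empDist permAct
  congr 2
  exact Finset.card_equiv σ.symm (by simp)

-- Matching the fibres of `z` and `w` over each letter gives the permutation.
lemma exists_permAct_eq_of_empDist_eq_s12 {z w : Fin m → α} (h : empDist z = empDist w) :
    ∃ σ : Perm (Fin m), permAct σ w = z := by
  rcases Nat.eq_zero_or_pos m with rfl | hm
  · exact ⟨1, Subsingleton.elim _ _⟩
  have hcard : ∀ a, #{i | z i = a} = #{i | w i = a} := fun a => by
    have h := congrFun h a
    unfold empDist at h
    rwa [div_left_inj' (by positivity), Nat.cast_inj] at h
  have e : ∀ a, {i // z i = a} ≃ {i // w i = a} := fun a =>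
    Fintype.equivOfCardEq (by simpa [Fintype.card_subtype] using hcard a)
  refine ⟨(Equiv.ofFiberEquiv e).symm, funext fun i => ?_⟩
  simpa [permAct] using Equiv.ofFiberEquiv_map e i

noncomputable def typeClass (d : Fin m → α) : Finset (Fin m → α) :=
  univ.filter fun z => empDist z = empDist d

@[simp]
lemma mem_typeClass {d z : Fin m → α} : z ∈ typeClass d ↔ empDist z = empDist d := by
  simp [typeClass]

lemma card_permAct_eq (d z : Fin m → α) :
    #{σ : Perm (Fin m) | permAct σ d = z} = if z ∈ typeClass d then stabCard d else 0 := by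
  split_ifs with h
  · obtain ⟨σ₀, rfl⟩ := exists_permAct_eq_of_empDist_eq_s12 (mem_typeClass.1 h)
    refine Finset.card_equiv (Equiv.mulLeft σ₀⁻¹) fun σ => ?_
    simp only [mem_filter, mem_univ, true_and, Equiv.coe_mulLeft]
    rw [permAct_mul, permAct_inv_eq_iff]
  · rw [Finset.card_eq_zero, Finset.filter_eq_empty_iff]
    rintro σ - rfl
    exact h (mem_typeClass.2 (empDist_permAct_s12 σ d))

lemma card_permAct_eq' (w e : Fin m → α) :
    #{τ : Perm (Fin m) | permAct τ w = e} = if w ∈ typeClass e then stabCard e else 0 := by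
  rw [← card_permAct_eq]
  refine Finset.card_equiv (Equiv.inv _) fun τ => ?_
  simp only [mem_filter, mem_univ, true_and, Equiv.inv_apply]
  rw [permAct_inv_eq_iff, eq_comm]

lemma sum_perm_permAct {M : Type*} [AddCommMonoid M] (d : Fin m → α) (f : (Fin m → α) → M) :
    ∑ σ : Perm (Fin m), f (permAct σ d) = stabCard d • ∑ z ∈ typeClass d, f z := by
  rw [← Finset.sum_fiberwise' univ (fun σ => permAct σ d) f]
  simp only [Finset.sum_const, card_permAct_eq, ite_smul, zero_smul]
  rw [Finset.sum_ite_mem, Finset.univ_inter, Finset.smul_sum]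

lemma stabCard_mul_card_typeClass (d : Fin m → α) :
    stabCard d * #(typeClass d) = Fintype.card (Perm (Fin m)) := by
  have h := sum_perm_permAct d fun _ => (1 : ℕ)
  simp only [Finset.sum_const, smul_eq_mul, mul_one, Finset.card_univ] at h
  exact h.symm

end PermAct

section PermutedCode

variable {X Y : Type*} [Fintype X] [Fintype Y] {n m : ℕ} {Ω : Type*} [Fintype Ω]

-- `Pr{Σ_l(F(Σ_n(d))) = e}`: the code `F` drawn with weights `μ`, composed with uniformly random
-- coordinate permutations `σ` of the input and `τ` of the output.
noncomputable def permutedCodeProb (μ : Ω → ℝ) (F : Ω → (Fin n → X) → (Fin m → Y))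
    (d : Fin n → X) (e : Fin m → Y) : ℝ :=
  ∑ ω, ∑ σ : Perm (Fin n), ∑ τ : Perm (Fin m),
    μ ω / ((Fintype.card (Perm (Fin n)) : ℝ) * (Fintype.card (Perm (Fin m)) : ℝ)) *
      (if permAct τ (F ω (permAct σ d)) = e then 1 else 0)

lemma sum_perm_sum_perm_boole (f : (Fin n → X) → (Fin m → Y)) (d : Fin n → X)
    (e : Fin m → Y) :
    ∑ σ : Perm (Fin n), ∑ τ : Perm (Fin m),
        (if permAct τ (f (permAct σ d)) = e then (1 : ℝ) else 0)
      = stabCard d * stabCard e *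
          #{z | empDist z = empDist d ∧ empDist (f z) = empDist e} := by
  simp only [Finset.sum_boole, card_permAct_eq']
  rw [sum_perm_permAct d fun z => ((if f z ∈ typeClass e then stabCard e else 0 : ℕ) : ℝ)]
  push_cast
  rw [← Finset.sum_filter, Finset.sum_const]
  simp only [typeClass, Finset.filter_filter, mem_filter, mem_univ, true_and, nsmul_eq_mul]
  ring

theorem permutedCodeProb_eq_alphaE (μ : Ω → ℝ) (F : Ω → (Fin n → X) → (Fin m → Y))
    (d : Fin n → X) (e : Fin m → Y) :
    permutedCodeProb μ F d e =
      alphaE μ F (empDist d) (empDist e) / (Fintype.card Y : ℝ) ^ m := by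
  have : Nonempty (Fin n → X) := ⟨d⟩
  have : Nonempty (Fin m → Y) := ⟨e⟩
  have hsd : (stabCard d : ℝ) ≠ 0 := Nat.cast_ne_zero.2 (stabCard_pos d).ne'
  have hse : (stabCard e : ℝ) ≠ 0 := Nat.cast_ne_zero.2 (stabCard_pos e).ne'
  have htd : (#{z | empDist z = empDist d} : ℝ) ≠ 0 :=
    Nat.cast_ne_zero.2 (card_ne_zero_of_mem (a := d) (by simp))
  have hte : (#{z | empDist z = empDist e} : ℝ) ≠ 0 :=
    Nat.cast_ne_zero.2 (card_ne_zero_of_mem (a := e) (by simp))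
  have hX : (Fintype.card X : ℝ) ^ n ≠ 0 := by
    simpa [Fintype.card_fun] using Fintype.card_ne_zero (α := Fin n → X)
  have hY : (Fintype.card Y : ℝ) ^ m ≠ 0 := by
    simpa [Fintype.card_fun] using Fintype.card_ne_zero (α := Fin m → Y)
  calc permutedCodeProb μ F d e
      = ∑ ω, μ ω * #{z | empDist z = empDist d ∧ empDist (F ω z) = empDist e} /
          (#{z | empDist z = empDist d} * #{z | empDist z = empDist e}) := by
        refine Finset.sum_congr rfl fun ω _ => ?_
        simp only [← Finset.mul_sum]
        rw [sum_perm_sum_perm_boole, ← stabCard_mul_card_typeClass d,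
          ← stabCard_mul_card_typeClass e, typeClass, typeClass]
        push_cast
        field_simp
    _ = alphaE μ F (empDist d) (empDist e) / (Fintype.card Y : ℝ) ^ m := by
        simp only [alphaE, jointSpec, fullJointSpec, specS, card_univ, Fintype.card_fun,
          Fintype.card_fin, Nat.cast_pow, ← mul_div_assoc, ← Finset.sum_div]
        field_simp

end PermutedCode

section Dither

variable {G : Type*} [Fintype G] [AddCommGroup G]

lemma sum_boole_add_left {β : Type*} [DecidableEq β] (f : G → β) (c : G) (y : β) :
    ∑ b, (if f (c + b) = y then (1 : ℝ) else 0) = #{u | f u = y} :=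
  (Equiv.sum_comp (Equiv.addLeft c) fun u => if f u = y then (1 : ℝ) else 0).trans
    (Finset.sum_boole ..)

lemma sum_boole_add_and_add [DecidableEq G] {β β' : Type*} [DecidableEq β] [DecidableEq β']
    (f : G → β) (f' : G → β') (c t : G) (y : β) (y' : β') :
    ∑ b, (if f (c + b) = y ∧ f' (c + t + b) = y' then (1 : ℝ) else 0)
      = ∑ u ∈ {u | f u = y}, ∑ u' ∈ {u | f' u = y'}, if t = u' - u then 1 else 0 := by
  have hshift : ∀ b, c + t + b = t + (c + b) := fun b => by abel
  simp only [hshift]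
  refine (Equiv.sum_comp (Equiv.addLeft c)
    fun u => if f u = y ∧ f' (t + u) = y' then (1 : ℝ) else 0).trans ?_
  simp only [eq_sub_iff_add_eq, eq_comm (a := t + _), Finset.sum_ite_eq', Finset.mem_filter,
    Finset.mem_univ, true_and, Finset.sum_filter, ite_and]

end Dither

section DitheredCode

variable {V U Xc : Type*} [Fintype V] [Fintype U] [Fintype Xc] [AddCommGroup V]
  [AddCommGroup U] {n l k : ℕ} {Ω : Type*} [Fintype Ω]

lemma prPhi_eq (μ : Ω → ℝ) (hμ1 : ∑ ω, μ ω = 1)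
    (F : Ω → ((Fin n → V) →+ (Fin l → U)))
    (q : (Fin n → V) → (Fin l → U) → (Fin k → Xc)) (v : Fin n → V) (x : Fin k → Xc) :
    prPhi μ F q v x = #{u | q v u = x} / (Fintype.card U : ℝ) ^ l := by
  simp only [prPhi, ← Finset.mul_sum, sum_boole_add_left, Finset.sum_const, card_univ,
    nsmul_eq_mul]
  rw [← Finset.sum_mul, ← Finset.sum_div, hμ1, Fintype.card_fun, Fintype.card_fin]
  push_cast
  field_simp

lemma prPhi2_eq (μ : Ω → ℝ) (F : Ω → ((Fin n → V) →+ (Fin l → U)))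
    (q : (Fin n → V) → (Fin l → U) → (Fin k → Xc)) (v v' : Fin n → V)
    (x x' : Fin k → Xc) :
    prPhi2 μ F q v v' x x' = ∑ u ∈ {u | q v u = x}, ∑ u' ∈ {u | q v' u = x'},
      permutedCodeProb μ (fun ω => ⇑(F ω)) (v' - v) (u' - u) / (Fintype.card U : ℝ) ^ l := by
  have hsplit : ∀ ω σ τ, permAct τ (F ω (permAct σ v')) =
      permAct τ (F ω (permAct σ v)) + permAct τ (F ω (permAct σ (v' - v))) := by
    intro ω σ τ
    rw [permAct_sub, map_sub, permAct_sub, add_sub_cancel]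
  simp only [prPhi2, hsplit, ← Finset.mul_sum, sum_boole_add_and_add]
  simp only [permutedCodeProb, Finset.mul_sum, Finset.sum_div]
  set A : Finset (Fin l → U) := {u | q v u = x}
  set A' : Finset (Fin l → U) := {u | q v' u = x'}
  simp only [Finset.sum_comm (t := A')]
  simp only [Finset.sum_comm (t := A)]
  simp only [Fintype.card_fun, Fintype.card_fin, Nat.cast_pow, div_mul_eq_mul_div, div_div]

end DitheredCode

theorem stmt12_general {V U Xc : Type*} [Fintype V] [Fintype U] [Fintype Xc]
    [AddCommGroup V] [AddCommGroup U] {n l k : ℕ} {Ω : Type*} [Fintype Ω] (μ : Ω → ℝ)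
    (hμ1 : ∑ ω, μ ω = 1)
    (F : Ω → ((Fin n → V) →+ (Fin l → U)))
    (q : (Fin n → V) → (Fin l → U) → (Fin k → Xc))
    (v v' : Fin n → V) (x x' : Fin k → Xc) :
    prPhi2 μ F q v v' x x' / prPhi μ F q v x
      = ((∑ u ∈ univ.filter (fun u : Fin l → U => q v u = x),
            ∑ u' ∈ univ.filter (fun u : Fin l → U => q v' u = x'),
              alphaE μ (fun ω => ⇑(F ω)) (empDist (v' - v)) (empDist (u' - u))) /
            (((univ.filter fun u : Fin l → U => q v u = x).card : ℝ) *
              ((univ.filter fun u : Fin l → U => q v' u = x').card : ℝ))) *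
          (((univ.filter fun u : Fin l → U => q v' u = x').card : ℝ) /
            (Fintype.card U : ℝ) ^ l) := by
  rw [prPhi2_eq, prPhi_eq μ hμ1]
  simp only [permutedCodeProb_eq_alphaE, ← Finset.sum_div]
  rcases (univ.filter fun u : Fin l → U => q v' u = x').eq_empty_or_nonempty with hA' | hA'
  · simp [hA']
  · have : ((univ.filter fun u : Fin l → U => q v' u = x').card : ℝ) ≠ 0 := by
      exact_mod_cast hA'.card_pos.ne'
    field_simp

theorem stmt12 {V U Xc : Type*} [Fintype V] [Fintype U] [Fintype Xc]
    [AddCommGroup V] [AddCommGroup U] {n l k : ℕ} {Ω : Type*} [Fintype Ω] (μ : Ω → ℝ)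
    (hμ0 : ∀ ω, 0 ≤ μ ω) (hμ1 : ∑ ω, μ ω = 1)
    (F : Ω → ((Fin n → V) →+ (Fin l → U)))
    (q : (Fin n → V) → (Fin l → U) → (Fin k → Xc))
    (v v' : Fin n → V) (hv : v ≠ v') (x x' : Fin k → Xc)
    (h1 : (univ.filter fun u : Fin l → U => q v u = x).Nonempty)
    (h2 : (univ.filter fun u : Fin l → U => q v' u = x').Nonempty) :
    prPhi2 μ F q v v' x x' / prPhi μ F q v x
      = ((∑ u ∈ univ.filter (fun u : Fin l → U => q v u = x),
            ∑ u' ∈ univ.filter (fun u : Fin l → U => q v' u = x'),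
              alphaE μ (fun ω => ⇑(F ω)) (empDist (v' - v)) (empDist (u' - u))) /
            (((univ.filter fun u : Fin l → U => q v u = x).card : ℝ) *
              ((univ.filter fun u : Fin l → U => q v' u = x').card : ℝ))) *
          (((univ.filter fun u : Fin l → U => q v' u = x').card : ℝ) /
            (Fintype.card U : ℝ) ^ l) :=
  stmt12_general μ hμ1 F q v v' x x'
end

section
/- Let F_n: X^n → Y^{m_n} be a good random linear code (i.e., max over types P ≠ P_{0^n} and Q of E[S_{XY}(F_n)(P,Q)]/S_{XY}(X^n × Y^{m_n})(P,Q) equals 1) with sup_n n/m_n < ∞. Then there exists a deterministic sample code f_n such that max over P ≠ P_{0^n} and Q of S_{XY}(f_n)(P,Q)/S_{XY}(X^n × Y^{m_n})(P,Q) < (n+1)^{c_1}(m_n+1)^{c_2}, for any constants c_1 > |X| and c_2 > |Y|. -/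
open Finset Filter

open scoped Classical

/-!
Averaged over the random code, the normalized spectrum of each pair of types `(P, Q)` with
`P ≠ P_{0^n}` has mean at most `1`, so the sum of these ratios over all such pairs has mean at
most the number of pairs, at most `(n+1)^|X| (m+1)^|Y| < (n+1)^c₁ (m+1)^c₂` (Markov plus a union
bound). Some code of positive probability therefore has this sum, hence every single ratio,
below the bound.
-/

lemma exists_pos_forall_lt_of_sum_mul_le_one {Ω ι : Type*} [Fintype Ω] (μ : Ω → ℝ)
    (hμ0 : ∀ ω, 0 ≤ μ ω) (hμ1 : ∑ ω, μ ω = 1) (s : Finset ι) (g : Ω → ι → ℝ)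
    (hg : ∀ ω, ∀ i ∈ s, 0 ≤ g ω i)
    (hmean : ∀ i ∈ s, ∑ ω, μ ω * g ω i ≤ 1) {T : ℝ} (hT : (#s : ℝ) < T) :
    ∃ ω, 0 < μ ω ∧ ∀ i ∈ s, g ω i < T := by
  have hsum_lt : ∑ ω, μ ω * ∑ i ∈ s, g ω i < ∑ ω, μ ω * T :=
    calc ∑ ω, μ ω * ∑ i ∈ s, g ω i = ∑ i ∈ s, ∑ ω, μ ω * g ω i := by
          simp_rw [Finset.mul_sum]; exact Finset.sum_comm
      _ ≤ ∑ _i ∈ s, (1 : ℝ) := Finset.sum_le_sum hmean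
      _ = #s := by simp
      _ < T := hT
      _ = ∑ ω, μ ω * T := by rw [← Finset.sum_mul, hμ1, one_mul]
  obtain ⟨ω, -, hω⟩ := Finset.exists_lt_of_sum_lt hsum_lt
  have hμω : 0 < μ ω := by
    refine (hμ0 ω).lt_of_ne fun h => ?_
    simp [← h] at hω
  refine ⟨ω, hμω, fun i hi => ?_⟩
  calc g ω i ≤ ∑ j ∈ s, g ω j := Finset.single_le_sum (hg ω) hi
    _ < T := lt_of_mul_lt_mul_left hω hμω.le

lemma card_image_empDist_le (X : Type*) [Fintype X] (n : ℕ) :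
    #((univ : Finset (Fin n → X)).image empDist) ≤ (n + 1) ^ Fintype.card X := by
  have hsub : (univ : Finset (Fin n → X)).image empDist ⊆
      (univ : Finset (X → Fin (n + 1))).image fun c a => (c a : ℝ) / n := by
    rintro _ hP
    obtain ⟨x, -, rfl⟩ := Finset.mem_image.mp hP
    refine Finset.mem_image.mpr
      ⟨fun a => ⟨#(univ.filter fun i => x i = a), Nat.lt_succ_of_le ?_⟩, Finset.mem_univ _, rfl⟩
    simpa using Finset.card_filter_le (univ : Finset (Fin n)) fun i => x i = a
  calc #((univ : Finset (Fin n → X)).image empDist)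
      ≤ #((univ : Finset (X → Fin (n + 1))).image fun c a => (c a : ℝ) / n) :=
        Finset.card_le_card hsub
    _ ≤ #(univ : Finset (X → Fin (n + 1))) := Finset.card_image_le
    _ = (n + 1) ^ Fintype.card X := by simp

lemma alphaE_eq_sum_mul_div {X Y : Type*} [Fintype X] [Fintype Y] {n m : ℕ} {Ω : Type*}
    [Fintype Ω] (μ : Ω → ℝ) (F : Ω → (Fin n → X) → (Fin m → Y)) (P : X → ℝ) (Q : Y → ℝ) :
    alphaE μ F P Q = ∑ ω, μ ω * (jointSpec (F ω) P Q / fullJointSpec X Y n m P Q) := by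
  simp only [alphaE, Finset.sum_div, mul_div_assoc]

lemma jointSpec_div_fullJointSpec_nonneg {X Y : Type*} [Fintype X] [Fintype Y] {n m : ℕ}
    (f : (Fin n → X) → (Fin m → Y)) (P : X → ℝ) (Q : Y → ℝ) :
    0 ≤ jointSpec f P Q / fullJointSpec X Y n m P Q := by
  unfold jointSpec fullJointSpec specS
  positivity

lemma natCast_pow_mul_lt_rpow_mul {n m k l : ℕ} (hn : 0 < n) {c₁ c₂ : ℝ}
    (hc₁ : (k : ℝ) < c₁) (hc₂ : (l : ℝ) ≤ c₂) :
    (((n + 1) ^ k * (m + 1) ^ l : ℕ) : ℝ) < ((n : ℝ) + 1) ^ c₁ * ((m : ℝ) + 1) ^ c₂ := by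
  have hn1 : (1 : ℝ) < n + 1 := by norm_cast; omega
  have hm1 : (1 : ℝ) ≤ m + 1 := by norm_cast; omega
  push_cast
  rw [← Real.rpow_natCast, ← Real.rpow_natCast]
  exact mul_lt_mul (Real.rpow_lt_rpow_of_exponent_lt hn1 hc₁)
    (Real.rpow_le_rpow_of_exponent_le hm1 hc₂) (by positivity) (by positivity)

theorem stmt13 {X Y : Type*} [Fintype X] [Fintype Y] [AddCommGroup X] [AddCommGroup Y]
    {n m : ℕ} (hn : 0 < n)
    {Ω : Type*} [Fintype Ω] (μ : Ω → ℝ) (hμ0 : ∀ ω, 0 ≤ μ ω) (hμ1 : ∑ ω, μ ω = 1)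
    (F : Ω → ((Fin n → X) →+ (Fin m → Y)))
    (hgood : ∀ x : Fin n → X, x ≠ 0 → ∀ y : Fin m → Y,
      alphaE μ (fun ω => ⇑(F ω)) (empDist x) (empDist y) ≤ 1)
    (c₁ c₂ : ℝ) (hc₁ : (Fintype.card X : ℝ) < c₁) (hc₂ : (Fintype.card Y : ℝ) < c₂) :
    ∃ ω, 0 < μ ω ∧ ∀ x : Fin n → X, x ≠ 0 → ∀ y : Fin m → Y,
      jointSpec (⇑(F ω)) (empDist x) (empDist y) /
          fullJointSpec X Y n m (empDist x) (empDist y)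
        < ((n : ℝ) + 1) ^ c₁ * ((m : ℝ) + 1) ^ c₂ := by
  set types : Finset ((X → ℝ) × (Y → ℝ)) :=
    (univ.filter fun x : Fin n → X => x ≠ 0).image empDist ×ˢ univ.image empDist
  have hcard : (#types : ℝ) < ((n : ℝ) + 1) ^ c₁ * ((m : ℝ) + 1) ^ c₂ := by
    refine lt_of_le_of_lt ?_ (natCast_pow_mul_lt_rpow_mul hn hc₁ hc₂.le)
    rw [Finset.card_product]
    gcongr
    · exact (Finset.card_le_card (Finset.image_subset_image (Finset.filter_subset _ _))).trans
        (card_image_empDist_le X n)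
    · exact card_image_empDist_le Y m
  have hmean : ∀ PQ ∈ types, ∑ ω, μ ω *
      (jointSpec (F ω) PQ.1 PQ.2 / fullJointSpec X Y n m PQ.1 PQ.2) ≤ 1 := by
    simp only [types, Finset.mem_product, Finset.mem_image, Finset.mem_filter]
    rintro ⟨_, _⟩ ⟨⟨x, ⟨-, hx⟩, rfl⟩, ⟨y, -, rfl⟩⟩
    simpa only [alphaE_eq_sum_mul_div] using hgood x hx y
  obtain ⟨ω, hω, hlt⟩ := exists_pos_forall_lt_of_sum_mul_le_one μ hμ0 hμ1 types _
    (fun ω _ _ => jointSpec_div_fullJointSpec_nonneg _ _ _) hmean hcard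
  refine ⟨ω, hω, fun x hx y => hlt (empDist x, empDist y) ?_⟩
  simp only [types, Finset.mem_product, Finset.mem_image, Finset.mem_filter]
  exact ⟨⟨x, ⟨Finset.mem_univ x, hx⟩, rfl⟩, ⟨y, Finset.mem_univ y, rfl⟩⟩
end

section
/- (Asymptotic Gilbert–Varshamov bound via code spectra) Let F_n be the uniform random linear code x ↦ x·A over F_q with A an n×m_n matrix of i.i.d. uniform entries, and let R̄ = limsup_n n/m_n. Define Δ_n = 1 − max_{x ≠ 0} P_{F_n(x)}(0) (the normalized minimum distance). Then liminf in probability of [h(Δ_n) + Δ_n ln(q−1)] ≥ (1 − R̄) ln q, where h(x) = −x ln x − (1−x) ln(1−x). -/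
open Finset Filter

open scoped Classical

noncomputable def deltaGV {K : Type*} [Fintype K] [Field K] {n m : ℕ}
    (A : Matrix (Fin n) (Fin m) K) : ℝ :=
  1 - sSup ((fun x : Fin n → K => empDist (Matrix.vecMul x A) 0) '' {x | x ≠ 0})

/-!
If `qaryEntropy q (deltaGV A) < β`, the minimum is attained at some `x ≠ 0` and the codeword
`y = x ᵥ* A` satisfies `H_q(wt y / m) < β`. For a fixed `x ≠ 0` the map `A ↦ x ᵥ* A` is a
surjective additive map, so `x ᵥ* A` is uniform on `K^m`, while comparing with the product law
`(1 - δ, δ/(q-1), …)^⊗m` shows that at most `(m + 1) e^{mβ}` vectors `y` have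
`H_q(wt y / m) < β`.
A union bound over the `q^n` choices of `x` gives the probability bound
`(m + 1) exp (mβ + (n - m) log q)`, which is `(m + 1) e^{-Cm}` with `C > 0` once
`n / m ≤ R̄ + ε` and `β < (1 - R̄) log q`.
-/

open Real Topology
open scoped Matrix

lemma binEnt_add_mul_log_eq_qaryEntropy (q : ℕ) (δ : ℝ) :
    binEnt δ + δ * log ((q : ℝ) - 1) = qaryEntropy q δ := by
  simp only [binEnt, qaryEntropy, binEntropy, log_inv]
  push_cast
  ring

lemma pow_eq_exp_mul_log {t : ℝ} {k : ℕ} (h : 0 < t ∨ k = 0) : t ^ k = exp (k * log t) := by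
  rcases h with ht | rfl
  · rw [← log_pow, exp_log (pow_pos ht k)]
  · simp

lemma card_mul_le_one_of_prod_eq {ι α : Type*} [Fintype ι] [Fintype α] {p : α → ℝ}
    (hp₀ : ∀ a, 0 ≤ p a) (hp₁ : ∑ a, p a = 1) {S : Finset (ι → α)} {c : ℝ}
    (hS : ∀ y ∈ S, ∏ i, p (y i) = c) : #S * c ≤ 1 :=
  calc #S * c = ∑ y ∈ S, ∏ i, p (y i) := by rw [sum_congr rfl hS, sum_const, nsmul_eq_mul]
    _ ≤ ∑ y : ι → α, ∏ i, p (y i) :=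
        sum_le_sum_of_subset_of_nonneg (subset_univ S) fun y _ _ => prod_nonneg fun i _ => hp₀ _
    _ = 1 := by rw [← Fintype.piFinset_univ, ← prod_univ_sum, hp₁, prod_const_one]

section HammingWeight

variable {α : Type*} [Zero α] {m w : ℕ}

lemma card_filter_eq_zero_add_hammingNorm (y : Fin m → α) :
    #{i | y i = 0} + hammingNorm y = m :=
  (card_filter_add_card_filter_not (s := univ) (fun i => y i = 0)).trans (card_fin m)

lemma one_sub_empDist_zero [Fintype α] (y : Fin m → α) (hm : 0 < m) :
    1 - empDist y 0 = hammingNorm y / m := by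
  have := card_filter_eq_zero_add_hammingNorm y
  rw [empDist, eq_div_iff (by positivity)]
  field_simp
  linarith [(by exact_mod_cast this : ((#{i | y i = 0} : ℕ) : ℝ) + hammingNorm y = m)]

lemma sum_ite_eq_zero_one_sub [Fintype α] [Nontrivial α] (δ : ℝ) :
    ∑ a : α, (if a = 0 then 1 - δ else δ / (Fintype.card α - 1)) = 1 := by
  have hq : (Fintype.card α : ℝ) - 1 ≠ 0 := by
    have : (1 : ℝ) < Fintype.card α := by exact_mod_cast Fintype.one_lt_card
    linarith
  rw [Fintype.sum_eq_add_sum_compl 0, if_pos rfl,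
    sum_congr rfl fun a ha => if_neg (by simpa using ha), sum_const, card_compl, card_singleton,
    nsmul_eq_mul, Nat.cast_sub Fintype.card_pos]
  field_simp
  ring

lemma prod_ite_eq_exp_neg_mul_qaryEntropy {q : ℕ} (hq : 1 < q) (y : Fin m → α) :
    ∏ i, (if y i = 0 then 1 - (hammingNorm y / m : ℝ) else (hammingNorm y / m : ℝ) / (q - 1))
      = exp (-(m * qaryEntropy q (hammingNorm y / m))) := by
  set w := hammingNorm y
  set δ : ℝ := w / m with hδ
  have hwm : w ≤ m := hammingNorm_le_card_fintype.trans_eq (Fintype.card_fin m)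
  have hmδ : m * δ = w := by
    rcases Nat.eq_zero_or_pos m with rfl | hm
    · simp [Nat.le_zero.mp hwm]
    · rw [hδ]; field_simp
  have hzero : #{i | y i = 0} = m - w := by
    have := card_filter_eq_zero_add_hammingNorm y
    omega
  have hpos₁ : 0 < 1 - δ ∨ m - w = 0 := by
    rcases hwm.lt_or_eq with hlt | heq
    · have hm : (0 : ℝ) < m := by exact_mod_cast (Nat.zero_le w).trans_lt hlt
      exact Or.inl (sub_pos.2 ((div_lt_one hm).2 (by exact_mod_cast hlt)))
    · exact Or.inr (Nat.sub_eq_zero_of_le heq.ge)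
  have hpos₂ : 0 < δ ∨ w = 0 := by
    rcases Nat.eq_zero_or_pos w with hw0 | hpos
    · exact Or.inr hw0
    · have hm : 0 < m := hpos.trans_le hwm
      exact Or.inl (by positivity)
  have hq' : (0 : ℝ) < q - 1 := by
    have : (1 : ℝ) < q := by exact_mod_cast hq
    linarith
  rw [prod_ite, prod_const, prod_const, hzero, ← hammingNorm, div_pow, pow_eq_exp_mul_log hpos₁,
    pow_eq_exp_mul_log hpos₂, pow_eq_exp_mul_log (Or.inl hq'), ← exp_sub, ← exp_add]
  congr 1
  simp only [qaryEntropy, binEntropy, log_inv]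
  push_cast [hwm]
  linear_combination (log (q - 1) - log δ + log (1 - δ)) * hmδ

lemma card_hammingNorm_eq_le [Fintype α] [Nontrivial α] (hw : w ≤ m) :
    #{y : Fin m → α | hammingNorm y = w} ≤
      exp (m * qaryEntropy (Fintype.card α) (w / m)) := by
  have hq : (1 : ℝ) < Fintype.card α := by exact_mod_cast Fintype.one_lt_card
  set δ : ℝ := w / m
  have hδ₁ : δ ≤ 1 := div_le_one_of_le₀ (by exact_mod_cast hw) (by positivity)
  -- every weight-`w` vector has mass `exp (-m H_q(δ))` under the product law `p^⊗m`
  let p : α → ℝ := fun a => if a = 0 then 1 - δ else δ / (Fintype.card α - 1)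
  have hp₀ : ∀ a, 0 ≤ p a := fun a => by
    unfold p; split_ifs
    · linarith
    · exact div_nonneg (by positivity) (by linarith)
  have hprod : ∀ y ∈ ({y : Fin m → α | hammingNorm y = w} : Finset _),
      ∏ i, p (y i) = exp (-(m * qaryEntropy (Fintype.card α) δ)) := by
    intro y hy
    have := prod_ite_eq_exp_neg_mul_qaryEntropy (Fintype.one_lt_card (α := α)) y
    rwa [(mem_filter.1 hy).2] at this
  have := card_mul_le_one_of_prod_eq hp₀ (sum_ite_eq_zero_one_sub δ) hprod
  rwa [Real.exp_neg, ← div_eq_mul_inv, div_le_one (exp_pos _)] at this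

lemma card_qaryEntropy_hammingNorm_lt_le [Fintype α] [Nontrivial α] (m : ℕ) (β : ℝ) :
    #{y : Fin m → α | qaryEntropy (Fintype.card α) (hammingNorm y / m) < β} ≤
      (m + 1) * exp (m * β) := by
  set S : Finset (Fin m → α) := {y | qaryEntropy (Fintype.card α) (hammingNorm y / m) < β}
  have hfiber :
      ∀ w ∈ range (m + 1), (#{y ∈ S | hammingNorm y = w} : ℝ) ≤ exp (m * β) := by
    intro w hw
    by_cases hβ : qaryEntropy (Fintype.card α) (w / m) < β
    · calc _ ≤ (#{y : Fin m → α | hammingNorm y = w} : ℝ) := by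
            gcongr
            exact subset_univ S
        _ ≤ exp (m * qaryEntropy (Fintype.card α) (w / m)) :=
            card_hammingNorm_eq_le (Nat.lt_succ_iff.mp (mem_range.mp hw))
        _ ≤ exp (m * β) := by gcongr
    · have hempty : {y ∈ S | hammingNorm y = w} = ∅ :=
        filter_eq_empty_iff.2 fun y hy hyw => hβ (by simpa [S, hyw] using hy)
      simp [hempty, (exp_pos _).le]
  rw [card_eq_sum_card_fiberwise (f := hammingNorm) (t := range (m + 1)) fun y _ =>
    mem_range.2 (Nat.lt_succ_of_le (hammingNorm_le_card_fintype.trans_eq (Fintype.card_fin m)))]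
  push_cast
  calc _ ≤ ∑ _w ∈ range (m + 1), exp (m * β) := sum_le_sum hfiber
    _ = (m + 1) * exp (m * β) := by simp

end HammingWeight

lemma AddMonoidHom.card_filter_mem_mul_card_eq {G M : Type*} [AddGroup G] [Fintype G]
    [AddMonoid M] [Fintype M] (f : G →+ M) (hf : Function.Surjective f) (S : Finset M) :
    #{g | f g ∈ S} * Fintype.card M = #S * Fintype.card G := by
  have hfiber : ∀ y, #{g | f g = y} = #{g | f g = 0} := fun y =>
    AddMonoidHom.card_fiber_eq_of_mem_range f (hf y) (hf 0)
  have hcard : Fintype.card G = Fintype.card M * #{g | f g = 0} := by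
    rw [← card_univ, card_eq_sum_card_fiberwise (t := univ) fun g _ => mem_univ (f g),
      sum_congr rfl fun y _ => hfiber y, sum_const, card_univ, smul_eq_mul]
  rw [← sum_card_fiberwise_eq_card_filter, sum_congr rfl fun y _ => hfiber y, sum_const,
    smul_eq_mul, hcard]
  ring

lemma Matrix.vecMul_surjective_of_ne_zero {R ι κ : Type*} [DivisionRing R] [Fintype ι]
    {x : ι → R} (hx : x ≠ 0) : Function.Surjective fun A : Matrix ι κ R => x ᵥ* A := by
  obtain ⟨i, hi⟩ := Function.ne_iff.1 hx
  refine fun y => ⟨Matrix.vecMulVec (Pi.single i (x i)⁻¹) y, ?_⟩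
  dsimp only
  rw [Matrix.vecMul_vecMulVec, dotProduct_single, mul_inv_cancel₀ hi, one_smul]

lemma Matrix.card_filter_vecMul_mem_mul_card {R ι κ : Type*} [DivisionRing R] [Fintype R]
    [Fintype ι] [Fintype κ] [DecidableEq ι] [DecidableEq κ] {x : ι → R} (hx : x ≠ 0)
    (S : Finset (κ → R)) :
    #{A : Matrix ι κ R | x ᵥ* A ∈ S} * Fintype.card (κ → R) =
      #S * Fintype.card (Matrix ι κ R) := by
  simpa using (AddMonoidHom.mk' (fun A : Matrix ι κ R => x ᵥ* A) fun A B =>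
    Matrix.vecMul_add A B x).card_filter_mem_mul_card_eq
      (Matrix.vecMul_surjective_of_ne_zero hx) S

section RandomLinearCode

variable {K : Type*} [Fintype K] [Field K] {n m : ℕ}

lemma exists_ne_zero_deltaGV_eq (hn : 0 < n) (A : Matrix (Fin n) (Fin m) K) :
    ∃ x ≠ 0, deltaGV A = 1 - empDist (x ᵥ* A) 0 := by
  have hone : (1 : Fin n → K) ≠ 0 := Function.ne_iff.2 ⟨⟨0, hn⟩, one_ne_zero⟩
  have hne : ((fun x : Fin n → K => empDist (x ᵥ* A) 0) '' {x | x ≠ 0}).Nonempty :=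
    ⟨_, Set.mem_image_of_mem _ hone⟩
  obtain ⟨x, hx, hmax⟩ := hne.csSup_mem (Set.toFinite _)
  exact ⟨x, hx, by rw [deltaGV, ← hmax]⟩

lemma card_filter_deltaGV_mul_card_le (hn : 0 < n) (P : ℝ → Prop) :
    #{A : Matrix (Fin n) (Fin m) K | P (deltaGV A)} * Fintype.card (Fin m → K) ≤
      Fintype.card (Fin n → K) * #{y : Fin m → K | P (1 - empDist y 0)} *
        Fintype.card (Matrix (Fin n) (Fin m) K) := by
  set S : Finset (Fin m → K) := {y | P (1 - empDist y 0)}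
  have hcover : ({A | P (deltaGV A)} : Finset (Matrix (Fin n) (Fin m) K)) ⊆
      ({x | x ≠ 0} : Finset (Fin n → K)).biUnion fun x => {A | x ᵥ* A ∈ S} := by
    intro A hA
    obtain ⟨x, hx, hΔ⟩ := exists_ne_zero_deltaGV_eq hn A
    simp only [S, mem_biUnion, mem_filter, mem_univ, true_and] at hA ⊢
    exact ⟨x, hx, hΔ ▸ hA⟩
  calc _ ≤ (∑ x ∈ ({x | x ≠ 0} : Finset (Fin n → K)),
          #{A : Matrix (Fin n) (Fin m) K | x ᵥ* A ∈ S}) * Fintype.card (Fin m → K) := by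
        gcongr
        exact (card_le_card hcover).trans card_biUnion_le
    _ = ∑ x ∈ ({x | x ≠ 0} : Finset (Fin n → K)),
          #S * Fintype.card (Matrix (Fin n) (Fin m) K) := by
        rw [sum_mul]
        exact sum_congr rfl fun x hx =>
          Matrix.card_filter_vecMul_mem_mul_card (mem_filter.1 hx).2 S
    _ ≤ _ := by
        rw [sum_const, smul_eq_mul, mul_assoc]
        gcongr
        exact card_le_univ _

lemma card_filter_qaryEntropy_deltaGV_lt_div_card_le (hn : 0 < n) (hm : 0 < m) (β : ℝ) :
    (#{A : Matrix (Fin n) (Fin m) K | qaryEntropy (Fintype.card K) (deltaGV A) < β} : ℝ) /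
        Fintype.card (Matrix (Fin n) (Fin m) K) ≤
      (m + 1) * exp (m * β + (n - m) * log (Fintype.card K)) := by
  have hcount := card_filter_deltaGV_mul_card_le (K := K) (m := m) hn
    (qaryEntropy (Fintype.card K) · < β)
  simp only [one_sub_empDist_zero _ hm, Fintype.card_fun, Fintype.card_fin] at hcount
  have hcountR := (Nat.cast_le (α := ℝ)).2 hcount
  push_cast at hcountR
  have hq : (0 : ℝ) < Fintype.card K := by exact_mod_cast Fintype.card_pos
  rw [pow_eq_exp_mul_log (Or.inl hq), pow_eq_exp_mul_log (Or.inl hq)] at hcountR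
  have hY := card_qaryEntropy_hammingNorm_lt_le (α := K) m β
  rw [div_le_iff₀ (by exact_mod_cast Fintype.card_pos)]
  set L := log (Fintype.card K)
  calc _ = (#{A : Matrix (Fin n) (Fin m) K | qaryEntropy (Fintype.card K) (deltaGV A) < β} : ℝ) *
        exp (m * L) / exp (m * L) := by field_simp
    _ ≤ exp (n * L) * ((m + 1) * exp (m * β)) * Fintype.card (Matrix (Fin n) (Fin m) K) /
        exp (m * L) := by
        gcongr ?_ / _
        exact hcountR.trans (by gcongr)
    _ = _ := by rw [exp_add, sub_mul, exp_sub]; ring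

end RandomLinearCode

lemma tendsto_natCast_atTop_of_eventually_div_le {m : ℕ → ℕ} (hm : ∀ n, 0 < m n) {c : ℝ}
    (h : ∀ᶠ n : ℕ in atTop, (n : ℝ) / m n ≤ c) :
    Tendsto (fun n => (m n : ℝ)) atTop atTop := by
  have hle : ∀ᶠ n : ℕ in atTop, (n : ℝ) ≤ c * m n :=
    h.mono fun n hn => (div_le_iff₀ (by exact_mod_cast hm n)).1 hn
  obtain ⟨n, hn, hn0⟩ := (hle.and (eventually_gt_atTop 0)).exists
  have hc : 0 < c := pos_of_mul_pos_left ((Nat.cast_pos.2 hn0).trans_le hn) (Nat.cast_nonneg _)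
  exact (tendsto_atTop_mono' _ hle tendsto_natCast_atTop_atTop).atTop_of_const_mul₀ hc

lemma tendsto_add_one_mul_exp_neg_mul_atTop {C : ℝ} (hC : 0 < C) :
    Tendsto (fun t => (t + 1) * exp (-C * t)) atTop (𝓝 0) := by
  have h := (tendsto_rpow_mul_exp_neg_mul_atTop_nhds_zero 1 C hC).add
    (tendsto_rpow_mul_exp_neg_mul_atTop_nhds_zero 0 C hC)
  rw [add_zero] at h
  refine h.congr' (Eventually.of_forall fun t => ?_)
  simp only [rpow_one, rpow_zero]
  ring

theorem stmt16 {K : Type*} [Fintype K] [Field K]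
    (m : ℕ → ℕ) (hm : ∀ n, 0 < m n) (Rbar : ℝ)
    (hR : ∀ ε > (0 : ℝ), ∀ᶠ n : ℕ in atTop, (n : ℝ) / (m n : ℝ) ≤ Rbar + ε) :
    ∀ β < (1 - Rbar) * Real.log (Fintype.card K),
      Tendsto (fun n =>
        ((univ.filter fun A : Matrix (Fin n) (Fin (m n)) K =>
            binEnt (deltaGV A) + deltaGV A * Real.log ((Fintype.card K : ℝ) - 1) < β).card : ℝ) /
          (Fintype.card (Matrix (Fin n) (Fin (m n)) K) : ℝ))
        atTop (nhds 0) := by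
  intro β hβ
  set L := log (Fintype.card K)
  have hL : 0 < L := log_pos (by exact_mod_cast Fintype.one_lt_card)
  set C := ((1 - Rbar) * L - β) / 2 with hCdef
  have hC : 0 < C := by linarith
  refine squeeze_zero' (Eventually.of_forall fun n => by positivity) ?_
    ((tendsto_add_one_mul_exp_neg_mul_atTop hC).comp
      (tendsto_natCast_atTop_of_eventually_div_le hm (hR 1 one_pos)))
  filter_upwards [hR (C / L) (div_pos hC hL), eventually_gt_atTop 0] with n hn hn0
  simp only [binEnt_add_mul_log_eq_qaryEntropy, Function.comp_apply]
  refine (card_filter_qaryEntropy_deltaGV_lt_div_card_le hn0 (hm n) β).trans ?_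
  gcongr
  have hnL : n * L ≤ Rbar * m n * L + C * m n := by
    have := mul_le_mul_of_nonneg_right ((div_le_iff₀ (by exact_mod_cast hm n)).1 hn) hL.le
    field_simp at this
    linarith
  have hCm : 2 * (C * m n) = (1 - Rbar) * L * m n - β * m n := by rw [hCdef]; ring
  change m n * β + (n - m n) * L ≤ -C * m n
  linarith
end
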